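/- arXiv:1912.10467 — 4 statements merged into one kernel-verified Lean document; each statement's English description precedes it below -/
import Mathlib

section
/- If every directed cycle of a digraph D contains a symmetric arc (an arc (u,v) such that (v,u) is also an arc), then D is kernel-perfect, i.e., every induced subdigraph of D has a kernel. -/
namespace DigraphKernel

variable {V : Type*}

/-- `Walk A n u v` : there is a directed walk of length `n` from `u` to `v`
in the digraph with arc relation `A`. -/
def Walk (A : V → V → Prop) : ℕ → V → V → Prop
  | 0, u, v => u = v
  | n + 1, u, v => ∃ w, A u w ∧ Walk A n w v

/-- The directed distance from `u` to `v` equals `n`. -/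
def DistEq (A : V → V → Prop) (u v : V) (n : ℕ) : Prop :=
  Walk A n u v ∧ ∀ m < n, ¬ Walk A m u v

/-- The directed distance from `u` to `v` is at most `n`. -/
def DistLE (A : V → V → Prop) (u v : V) (n : ℕ) : Prop :=
  ∃ m ≤ n, Walk A m u v

/-- A digraph is strongly connected. -/
def StrongConnected (A : V → V → Prop) : Prop := ∀ u v : V, ∃ n, Walk A n u v

/-- The `m`-closure `C^m(D)`: an arc `(u,v)` whenever `0 < d_D(u,v) ≤ m`. -/
def Closure (A : V → V → Prop) (m : ℕ) : V → V → Prop :=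
  fun u v => u ≠ v ∧ DistLE A u v m

/-- A directed cycle of length `n`, given as an injective cyclic sequence of vertices
consecutive ones joined by arcs. -/
def IsCycle (A : V → V → Prop) {n : ℕ} (c : ZMod n → V) : Prop :=
  Function.Injective c ∧ ∀ i, A (c i) (c (i + 1))

/-- A short chord of the cycle `c` at position `i` : an arc from `c i` to the vertex two
steps ahead along the cycle, which is not an arc of the cycle. -/
def ShortChordAt (A : V → V → Prop) {n : ℕ} (c : ZMod n → V) (i : ZMod n) : Prop :=
  A (c i) (c (i + 2)) ∧ ∀ j : ZMod n, ¬ (c i = c j ∧ c (i + 2) = c (j + 1))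

/-- The cycle `c` has two consecutive short chords. -/
def TwoConsecutiveShortChords (A : V → V → Prop) {n : ℕ} (c : ZMod n → V) : Prop :=
  ∃ i, ShortChordAt A c i ∧ ShortChordAt A c (i + 2)

/-- The cycle `c` has three short chords: two consecutive ones and a third crossing
one of the former. -/
def ThreeShortChords (A : V → V → Prop) {n : ℕ} (c : ZMod n → V) : Prop :=
  ∃ i, ShortChordAt A c i ∧ ShortChordAt A c (i + 2) ∧
    (ShortChordAt A c (i - 1) ∨ ShortChordAt A c (i + 1) ∨ ShortChordAt A c (i + 3))

/-- The cycle `c` has four (distinct) short chords. -/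
def FourShortChords (A : V → V → Prop) {n : ℕ} (c : ZMod n → V) : Prop :=
  ∃ i₁ i₂ i₃ i₄ : ZMod n, i₁ ≠ i₂ ∧ i₁ ≠ i₃ ∧ i₁ ≠ i₄ ∧ i₂ ≠ i₃ ∧ i₂ ≠ i₄ ∧ i₃ ≠ i₄ ∧
    ShortChordAt A c i₁ ∧ ShortChordAt A c i₂ ∧ ShortChordAt A c i₃ ∧ ShortChordAt A c i₄

/-- A kernel of a digraph: an independent, absorbent set. -/
def Kernel (A : V → V → Prop) (K : Set V) : Prop :=
  (∀ u ∈ K, ∀ v ∈ K, u ≠ v → ¬ A u v) ∧ (∀ u ∉ K, ∃ v ∈ K, A u v)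

/-- A kernel of the induced subdigraph `D[S]`. -/
def KernelOn (A : V → V → Prop) (S : Set V) (K : Set V) : Prop :=
  K ⊆ S ∧ (∀ u ∈ K, ∀ v ∈ K, u ≠ v → ¬ A u v) ∧
    (∀ u ∈ S, u ∉ K → ∃ v ∈ K, A u v)

/-- `K` is `k`-independent: distinct vertices of `K` are at distance `≥ k`. -/
def KIndep (A : V → V → Prop) (K : Set V) (k : ℕ) : Prop :=
  ∀ u ∈ K, ∀ v ∈ K, u ≠ v → ∀ n < k, ¬ Walk A n u v

/-- `K` is `l`-absorbent. -/
def LAbsorb (A : V → V → Prop) (K : Set V) (l : ℕ) : Prop :=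
  ∀ u ∉ K, ∃ v ∈ K, DistLE A u v l

/-- A `k`-kernel: a `k`-independent, `(k-1)`-absorbent set. -/
def KKernel (A : V → V → Prop) (K : Set V) (k : ℕ) : Prop :=
  KIndep A K k ∧ LAbsorb A K (k - 1)

/-- A `3`-kernel. -/
def Kernel3 (A : V → V → Prop) (K : Set V) : Prop := KKernel A K 3

/-- Arc relation of the induced subdigraph `D[S]`. -/
def Restrict (A : V → V → Prop) (S : Set V) : V → V → Prop :=
  fun u v => u ∈ S ∧ v ∈ S ∧ A u v

/-- A `3`-kernel of the induced subdigraph `D[S]`. -/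
def Kernel3On (A : V → V → Prop) (S : Set V) (K : Set V) : Prop :=
  K ⊆ S ∧ KIndep (Restrict A S) K 3 ∧
    ∀ u ∈ S, u ∉ K → ∃ v ∈ K, DistLE (Restrict A S) u v 2

/-- The `ℓ`-in-neighbourhood of a set `S`. -/
def InNbhd (A : V → V → Prop) (ℓ : ℕ) (S : Set V) : Set V :=
  {u | u ∉ S ∧ ∃ v ∈ S, DistEq A u v ℓ}

/-- The cone of distance two of a vertex: `{v : 0 < d(x,v) ≤ 2}`. -/
def Cone2 (A : V → V → Prop) (x : V) : Set V :=
  {v | v ≠ x ∧ DistLE A x v 2}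

/-- A `3`-substitution sequence of a digraph, starting at a vertex `x₀`
and a `3`-kernel `K` of `D - x₀`. -/
structure SubstSeq (A : V → V → Prop) (x₀ : V) (K : Set V) where
  p : ℕ
  N : ℕ → Set V
  M : ℕ → Set V
  hN0 : N 0 = {x₀}
  hM0 : M 0 = {x₀}
  hN1 : ∀ k, N (3*k+1) =
    (InNbhd A 1 (N (3*k)) ∩ K) \ ⋃ k' < k, (N (3*k'+1) ∪ N (3*k'+2))
  hN2 : ∀ k, N (3*k+2) =
    (InNbhd A 2 (N (3*k)) ∩ K) \ ⋃ k' < k, (N (3*k'+1) ∪ N (3*k'+2))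
  hM3 : ∀ k, M (3*k+3) =
    {x | x ∉ ⋃ k' ≤ k, M (3*k') ∧
      Cone2 A x ∩ K ⊆ ⋃ k' ≤ k, (N (3*k'+1) ∪ N (3*k'+2)) ∧
      Cone2 A x ∩ ⋃ k' ≤ k, N (3*k') = ∅}
  hN3 : ∀ k, Kernel3On A (M (3*k+3)) (N (3*k+3))
  hp : N (3*p+1) = ∅ ∧ N (3*p+2) = ∅
  hpmin : ∀ k < p, N (3*k+1) ≠ ∅ ∨ N (3*k+2) ≠ ∅

variable {A : V → V → Prop} {x₀ : V} {K : Set V}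

/-- The pre-`3`-kernel obtained from a `3`-substitution sequence. -/
def preKernel (S : SubstSeq A x₀ K) : Set V :=
  (K \ ⋃ k ≤ S.p, (S.N (3*k+1) ∪ S.N (3*k+2))) ∪ ⋃ k ≤ S.p, S.N (3*k)

/-- The intermediate set `N'_{3k+1} = N^-(N_{3k}) \ N_{3k+1}`. -/
def interN1 (S : SubstSeq A x₀ K) (k : ℕ) : Set V :=
  InNbhd A 1 (S.N (3*k)) \ S.N (3*k+1)

/-- The intermediate set `N'_{3k+2} = N^{2-}(N_{3k}) \ N_{3k+2}`. -/
def interN2 (S : SubstSeq A x₀ K) (k : ℕ) : Set V :=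
  InNbhd A 2 (S.N (3*k)) \ S.N (3*k+2)

/-- `t` (restricted to indices `≤ s`) is a road `(t_s, …, t_0)`. -/
def IsRoad (S : SubstSeq A x₀ K) (s : ℕ) (t : ℕ → V) : Prop :=
  s ≤ 3*S.p ∧
  t s ∈ S.N s ∧
  (∀ i < s, A (t (i+1)) (t i)) ∧
  (∀ i ≤ s, ∀ j ≤ s, t i = t j → i = j) ∧
  (∀ i, 3*i ≤ s → t (3*i) ∈ S.N (3*i)) ∧
  (∀ i, 3*i+2 ≤ s → (t (3*i+1) ∈ S.N (3*i+1) ↔ t (3*i+2) ∈ interN2 S i)) ∧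
  (∀ i, 2 ≤ i → i ≤ s → A (t i) (t (i-2)) →
    ∃ j, 1 ≤ j ∧ 3*j < s ∧ t i ∈ interN1 S j ∧ t (i-2) ∈ interN2 S (j-1))

/-- In a finite digraph in which every directed cycle contains a symmetric arc,
every nonempty set of vertices contains a vertex all of whose out-arcs inside the set
are symmetric. -/
lemma exists_sink_aux {V : Type*} [Fintype V]
    (A : V → V → Prop) (hloopless : Irreflexive A)
    (hcyc : ∀ (n : ℕ), 2 ≤ n → ∀ c : ZMod n → V, IsCycle A c → ∃ i, A (c (i + 1)) (c i))
    (S : Set V) (hS : S.Nonempty) :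
    ∃ x ∈ S, ∀ y ∈ S, A x y → A y x := by
  classical
  by_contra hcon
  push_neg at hcon
  -- choose a successor function
  have hcon' : ∀ x : V, ∃ y : V, x ∈ S → (y ∈ S ∧ A x y ∧ ¬ A y x) := by
    intro x
    by_cases hx : x ∈ S
    · obtain ⟨y, hyS, hxy, hnyx⟩ := hcon x hx
      exact ⟨y, fun _ => ⟨hyS, hxy, hnyx⟩⟩
    · exact ⟨x, fun h => absurd h hx⟩
  choose g hg using hcon'
  obtain ⟨x₀, hx₀⟩ := hS
  have hiter : ∀ k, g^[k] x₀ ∈ S := by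
    intro k
    induction k with
    | zero => simpa using hx₀
    | succ k ih =>
      rw [Function.iterate_succ_apply']
      exact (hg _ ih).1
  -- pigeonhole: the iterates repeat
  obtain ⟨a, b, hab, heq⟩ :=
    Finite.exists_ne_map_eq_of_infinite (fun k : ℕ => g^[k] x₀)
  wlog hlt : a < b generalizing a b
  · exact this b a hab.symm heq.symm (by omega)
  set y : V := g^[a] x₀ with hy
  have hyS : y ∈ S := hiter a
  have hyper : g^[b - a] y = y := by
    have : g^[(b - a) + a] x₀ = g^[a] x₀ := by
      rw [show (b - a) + a = b by omega]
      exact heq.symm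
    rw [Function.iterate_add_apply] at this
    exact this
  have hex : ∃ n : ℕ, 0 < n ∧ g^[n] y = y := ⟨b - a, by omega, hyper⟩
  set n : ℕ := Nat.find hex with hn
  obtain ⟨hn0, hny⟩ : 0 < n ∧ g^[n] y = y := Nat.find_spec hex
  have hmin : ∀ k, 0 < k → g^[k] y = y → n ≤ k := fun k hk1 hk2 =>
    Nat.find_le ⟨hk1, hk2⟩
  have hyiterS : ∀ k, g^[k] y ∈ S := by
    intro k
    rw [hy, ← Function.iterate_add_apply]
    exact hiter (k + a)
  have hn2 : 2 ≤ n := by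
    by_contra h
    have h1 : n = 1 := by omega
    rw [h1] at hny
    have h2 : g y = y := by simpa using hny
    have h3 := (hg y hyS).2.1
    rw [h2] at h3
    exact absurd h3 (hloopless y)
  haveI : NeZero n := ⟨by omega⟩
  haveI : Fact (1 < n) := ⟨hn2⟩
  -- periodicity
  have hmul : ∀ q, g^[n * q] y = y := by
    intro q
    induction q with
    | zero => simp
    | succ q ih =>
      rw [Nat.mul_succ, Function.iterate_add_apply, hny, ih]
  have hP : ∀ k, g^[k % n] y = g^[k] y := by
    intro k
    conv_rhs => rw [← Nat.mod_add_div k n, Function.iterate_add_apply, hmul]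
  -- the cycle
  set c : ZMod n → V := fun i => g^[i.val] y with hc
  have hstep : ∀ i : ZMod n, c (i + 1) = g (c i) := by
    intro i
    have h1 : (i + 1).val = (i.val + 1) % n := by
      rw [ZMod.val_add, ZMod.val_one]
    rw [hc]
    simp only
    rw [h1, hP (i.val + 1), Function.iterate_succ_apply']
  have hne : ∀ p q : ℕ, p < q → q < n → g^[p] y ≠ g^[q] y := by
    intro p q hpq hqn habs
    have h1 : g^[(n - q) + p] y = g^[(n - q) + q] y := by
      rw [Function.iterate_add_apply, Function.iterate_add_apply, habs]
    rw [show (n - q) + q = n by omega, hny] at h1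
    have := hmin ((n - q) + p) (by omega) h1
    omega
  have hinj : Function.Injective c := by
    intro i j hij
    have hi : i.val < n := ZMod.val_lt i
    have hj : j.val < n := ZMod.val_lt j
    have hval : i.val = j.val := by
      rcases Nat.lt_trichotomy i.val j.val with h | h | h
      · exact absurd hij (hne _ _ h hj)
      · exact h
      · exact absurd hij.symm (hne _ _ h hi)
    have : (i.val : ZMod n) = (j.val : ZMod n) := by rw [hval]
    rwa [ZMod.natCast_val, ZMod.natCast_val, ZMod.cast_id, ZMod.cast_id] at this
  have harcs : ∀ i : ZMod n, A (c i) (c (i + 1)) := by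
    intro i
    rw [hstep i]
    exact (hg (c i) (hyiterS i.val)).2.1
  obtain ⟨i, hi⟩ := hcyc n hn2 c ⟨hinj, harcs⟩
  rw [hstep i] at hi
  exact (hg (c i) (hyiterS i.val)).2.2 hi

/-- Duchet: if every directed cycle of `D` contains a symmetric arc,
then `D` is kernel-perfect. -/
theorem kernelPerfect_of_symmetric_arc_in_every_cycle {V : Type*} [Fintype V]
    (A : V → V → Prop) (hloopless : Irreflexive A)
    (hcyc : ∀ (n : ℕ), 2 ≤ n → ∀ c : ZMod n → V, IsCycle A c → ∃ i, A (c (i + 1)) (c i)) :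
    ∀ S : Set V, ∃ K : Set V, KernelOn A S K := by
  classical
  suffices h : ∀ m : ℕ, ∀ S : Set V, S.ncard ≤ m → ∃ K : Set V, KernelOn A S K by
    intro S
    exact h S.ncard S le_rfl
  intro m
  induction m with
  | zero =>
    intro S hS
    have : S = ∅ := by
      have hfin : S.Finite := S.toFinite
      rw [← Set.ncard_eq_zero hfin]
      omega
    subst this
    exact ⟨∅, Set.Subset.rfl, fun u hu => absurd hu (by simp),
      fun u hu => absurd hu (by simp)⟩
  | succ m ih =>
    intro S hS
    rcases S.eq_empty_or_nonempty with rfl | hne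
    · exact ⟨∅, Set.Subset.rfl, fun u hu => absurd hu (by simp),
        fun u hu => absurd hu (by simp)⟩
    obtain ⟨x, hxS, hx⟩ := exists_sink_aux A hloopless hcyc S hne
    set S' : Set V := {v ∈ S | v ≠ x ∧ ¬ A v x} with hS'
    have hsub : S' ⊆ S := fun v hv => hv.1
    have hxnot : x ∉ S' := fun h => h.2.1 rfl
    have hlt : S'.ncard < S.ncard :=
      Set.ncard_lt_ncard ⟨hsub, fun h => hxnot (h hxS)⟩ S.toFinite
    obtain ⟨K', hK'sub, hK'ind, hK'abs⟩ := ih S' (by omega)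
    refine ⟨insert x K', ?_, ?_, ?_⟩
    · intro v hv
      rcases hv with rfl | hv
      · exact hxS
      · exact hsub (hK'sub hv)
    · intro u hu v hv huv
      rcases hu with rfl | hu
      · rcases hv with rfl | hv
        · exact absurd rfl huv
        · intro hA
          exact (hK'sub hv).2.2 (hx v (hsub (hK'sub hv)) hA)
      · rcases hv with rfl | hv
        · exact (hK'sub hu).2.2
        · exact hK'ind u hu v hv huv
    · intro u huS huK
      have hux : u ≠ x := fun h => huK (h ▸ Set.mem_insert x K')
      by_cases hA : A u x
      · exact ⟨x, Set.mem_insert x K', hA⟩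
      · have huS' : u ∈ S' := ⟨huS, hux, hA⟩
        have huK' : u ∉ K' := fun h => huK (Set.mem_insert_of_mem x h)
        obtain ⟨v, hv, hAv⟩ := hK'abs u huS' huK'
        exact ⟨v, Set.mem_insert_of_mem x hv, hAv⟩

end DigraphKernel
end

section
/- Let D be a digraph, let (N_0, N_1, ..., N_{3p}) be a 3-substitution sequence of D starting at a vertex x_0 and a 3-kernel K of D − x_0, and let N be the resulting pre-3-kernel. Then N is 2-absorbent in D. -/
namespace DigraphKernel

variable {V : Type*}

variable {A : V → V → Prop} {x₀ : V} {K : Set V}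

lemma walk_of_restrict {S : Set V} {A : V → V → Prop} :
    ∀ {n : ℕ} {u v : V}, Walk (Restrict A S) n u v → Walk A n u v := by
  intro n
  induction n with
  | zero => exact fun h => h
  | succ n ih =>
    rintro u v ⟨w, ⟨_, _, h⟩, hw⟩
    exact ⟨w, h, ih hw⟩

lemma distLE_of_restrict {S : Set V} {A : V → V → Prop} {u v : V} {n : ℕ}
    (h : DistLE (Restrict A S) u v n) : DistLE A u v n := by
  obtain ⟨m, hm, hw⟩ := h
  exact ⟨m, hm, walk_of_restrict hw⟩

/-- the pre-`3`-kernel obtained from a `3`-substitution sequence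
is `2`-absorbent in `D`. -/
theorem preKernel_two_absorbent {V : Type*} (A : V → V → Prop) (x₀ : V) (K : Set V)
    (hK : Kernel3On A {v | v ≠ x₀} K) (S : SubstSeq A x₀ K) :
    ∀ u ∉ preKernel S, ∃ v ∈ preKernel S, DistLE A u v 2 := by
  classical
  intro u hu
  -- vertices of the N (3*k), k ≤ p, belong to the pre-kernel
  have hN3mem : ∀ k ≤ S.p, ∀ v ∈ S.N (3*k), v ∈ preKernel S := by
    intro k hk v hv
    exact Or.inr (Set.mem_iUnion₂.2 ⟨k, hk, hv⟩)
  have hx₀pre : x₀ ∈ preKernel S := by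
    refine hN3mem 0 (Nat.zero_le _) x₀ ?_
    rw [show 3*0 = 0 from rfl, S.hN0]; rfl
  have hux₀ : u ≠ x₀ := fun h => hu (h ▸ hx₀pre)
  by_cases huK : u ∈ K
  · -- u ∈ K: it must be in some N (3k+1) ∪ N (3k+2)
    have hU : u ∈ ⋃ k ≤ S.p, (S.N (3*k+1) ∪ S.N (3*k+2)) := by
      by_contra h
      exact hu (Or.inl ⟨huK, h⟩)
    obtain ⟨k, hk, hmem⟩ := Set.mem_iUnion₂.1 hU
    rcases hmem with h1 | h2
    · rw [S.hN1 k] at h1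
      obtain ⟨v, hv, hd⟩ := h1.1.1.2
      exact ⟨v, hN3mem k hk v hv, 1, by norm_num, hd.1⟩
    · rw [S.hN2 k] at h2
      obtain ⟨v, hv, hd⟩ := h2.1.1.2
      exact ⟨v, hN3mem k hk v hv, 2, le_refl 2, hd.1⟩
  · by_cases hM : u ∈ ⋃ k ≤ S.p, S.M (3*k)
    · obtain ⟨k, hk, hmem⟩ := Set.mem_iUnion₂.1 hM
      cases k with
      | zero =>
        exfalso
        rw [show 3*0 = 0 from rfl, S.hM0] at hmem
        exact hux₀ hmem
      | succ j =>
        have hj3 : 3*(j+1) = 3*j+3 := by ring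
        rw [hj3] at hmem
        have huN : u ∉ S.N (3*j+3) := by
          intro h
          exact hu (hN3mem (j+1) hk u (by rw [hj3]; exact h))
        obtain ⟨v, hv, hd⟩ := (S.hN3 j).2.2 u hmem huN
        exact ⟨v, hN3mem (j+1) hk v (by rw [hj3]; exact hv), distLE_of_restrict hd⟩
    · by_cases hM3 : u ∈ S.M (3*S.p+3)
      · exfalso
        rw [S.hM3 S.p] at hM3
        obtain ⟨hi, hsub, hemp⟩ := hM3
        rcases Nat.eq_zero_or_pos S.p with hp0 | hppos
        · -- p = 0 : u would have its K-absorber in N 1 ∪ N 2 = ∅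
          obtain ⟨v, hvK, hd⟩ := hK.2.2 u hux₀ huK
          have hvC : v ∈ Cone2 A u ∩ K := by
            refine ⟨⟨fun h => huK (h ▸ hvK), distLE_of_restrict hd⟩, hvK⟩
          obtain ⟨k, hk, hmem⟩ := Set.mem_iUnion₂.1 (hsub hvC)
          rw [hp0] at hk
          have hk0 : k = 0 := Nat.le_zero.1 hk
          subst hk0
          have h1 : S.N (3*0+1) = ∅ := by rw [← hp0] at *; exact S.hp.1
          have h2 : S.N (3*0+2) = ∅ := by rw [← hp0] at *; exact S.hp.2
          rcases hmem with h | h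
          · rw [h1] at h; exact h
          · rw [h2] at h; exact h
        · -- p = q + 1 : u would already belong to M (3q+3) = M (3p)
          obtain ⟨q, hq⟩ := Nat.exists_eq_succ_of_ne_zero (Nat.pos_iff_ne_zero.1 hppos)
          have huMq : u ∈ S.M (3*q+3) := by
            rw [S.hM3 q]
            refine ⟨?_, ?_, ?_⟩
            · intro h
              obtain ⟨k, hk, hmem⟩ := Set.mem_iUnion₂.1 h
              exact hi (Set.mem_iUnion₂.2 ⟨k, le_trans hk (by omega), hmem⟩)
            · intro v hv
              obtain ⟨k, hk, hmem⟩ := Set.mem_iUnion₂.1 (hsub hv)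
              rcases Nat.lt_or_ge k S.p with hlt | hge
              · exact Set.mem_iUnion₂.2 ⟨k, by omega, hmem⟩
              · have : k = S.p := le_antisymm hk hge
                subst this
                rcases hmem with h | h
                · rw [S.hp.1] at h; exact absurd h (Set.notMem_empty v)
                · rw [S.hp.2] at h; exact absurd h (Set.notMem_empty v)
            · rw [Set.eq_empty_iff_forall_notMem]
              intro v hv
              obtain ⟨hvC, hvU⟩ := hv
              obtain ⟨k, hk, hmem⟩ := Set.mem_iUnion₂.1 hvU
              have : v ∈ Cone2 A u ∩ ⋃ k' ≤ S.p, S.N (3*k') :=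
                ⟨hvC, Set.mem_iUnion₂.2 ⟨k, by omega, hmem⟩⟩
              rw [hemp] at this
              exact this
          exact hi (Set.mem_iUnion₂.2 ⟨q+1, by omega, by
            rw [show 3*(q+1) = 3*q+3 from by ring]; exact huMq⟩)
      · -- u fails the defining conditions of M (3p+3)
        rw [S.hM3 S.p] at hM3
        simp only [Set.mem_setOf_eq, not_and] at hM3
        by_cases hB : Cone2 A u ∩ K ⊆ ⋃ k' ≤ S.p, (S.N (3*k'+1) ∪ S.N (3*k'+2))
        case neg =>
          -- Cone2 u ∩ K has an element outside the union: it is in the pre-kernel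
          obtain ⟨v, hvin, hvout⟩ := Set.not_subset.1 hB
          exact ⟨v, Or.inl ⟨hvin.2, hvout⟩, hvin.1.2⟩
        case pos =>
          have hC := hM3 hM hB
          -- Cone2 u meets some N (3k'): that vertex is in the pre-kernel
          obtain ⟨w, hw⟩ := Set.nonempty_iff_ne_empty.2 hC
          obtain ⟨hwC, hwU⟩ := hw
          obtain ⟨k, hk, hmem⟩ := Set.mem_iUnion₂.1 hwU
          exact ⟨w, hN3mem k hk w hmem, hwC.2⟩

end DigraphKernel
end

section
/- Let D be a digraph with 3-substitution sequence (N_0,...,N_{3p}) starting at x_0 and a 3-kernel K of D − x_0, with intermediate sets (N'_1, N'_2, ..., N'_{3p-1}). Let T = (t_s, ..., t_0) be a road of D. If (t_i, t_{i-2}) ∈ A(D) for some 2 < i < s, then no other arc (t_{i'}, t_{i'-2}) with i' ≠ i exists; moreover t_{3k'+2} ∈ N_{3k'+2} for every index 3k'+2 > i. -/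
namespace DigraphKernel

variable {V : Type*}

variable {A : V → V → Prop} {x₀ : V} {K : Set V}

/-- a road has at most one short chord `(t_i, t_{i-2})`; moreover after
such a chord all vertices `t_{3k'+2}` lie in `N_{3k'+2}`. -/
theorem road_short_chord_unique {V : Type*} (A : V → V → Prop) (x₀ : V) (K : Set V)
    (hK : Kernel3On A {v | v ≠ x₀} K) (S : SubstSeq A x₀ K)
    (s : ℕ) (t : ℕ → V) (hroad : IsRoad S s t)
    (i : ℕ) (hi2 : 2 < i) (his : i < s) (hchord : A (t i) (t (i - 2))) :
    (∀ i' : ℕ, 2 ≤ i' → i' ≤ s → i' ≠ i → ¬ A (t i') (t (i' - 2))) ∧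
    (∀ k' : ℕ, i < 3*k'+2 → 3*k'+2 ≤ s → t (3*k'+2) ∈ S.N (3*k'+2)) := by
  obtain ⟨hsp, hts, harc, hinj, hN0mem, hequiv, hchordcl⟩ := hroad
  have harc' : ∀ a b : ℕ, a = b + 1 → a ≤ s → A (t a) (t b) := by
    intro a b h ha; subst h; exact harc b (by omega)
  have ht0 : t 0 = x₀ := by
    have h := hN0mem 0 (by omega)
    rw [show 3 * 0 = 0 from rfl, S.hN0] at h
    exact h
  have tne : ∀ a b : ℕ, a ≤ s → b ≤ s → a ≠ b → t a ≠ t b :=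
    fun a b ha hb hab h => hab (hinj a ha b hb h)
  have tnx : ∀ a : ℕ, a ≤ s → a ≠ 0 → t a ≠ x₀ := by
    intro a ha h0; rw [← ht0]; exact tne a 0 ha (by omega) h0
  have subK1 : ∀ m, ∀ x, x ∈ S.N (3*m+1) → x ∈ K := by
    intro m x hx; rw [S.hN1 m] at hx; exact hx.1.2
  have subK2 : ∀ m, ∀ x, x ∈ S.N (3*m+2) → x ∈ K := by
    intro m x hx; rw [S.hN2 m] at hx; exact hx.1.2
  have karc1 : ∀ u v : V, u ∈ K → v ∈ K → u ≠ v → A u v → False := by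
    intro u v hu hv huv hA
    exact hK.2.1 u hu v hv huv 1 (by omega) ⟨v, ⟨hK.1 hu, hK.1 hv, hA⟩, rfl⟩
  have karc2 : ∀ u w v : V, u ∈ K → v ∈ K → w ≠ x₀ → u ≠ v → A u w → A w v → False := by
    intro u w v hu hv hw huv h1 h2
    exact hK.2.1 u hu v hv huv 2 (by omega) ⟨w, ⟨hK.1 hu, hw, h1⟩, v, ⟨hw, hK.1 hv, h2⟩, rfl⟩
  have mcone : ∀ c, 3*c+3 ≤ s → ∀ y : V, y ≠ t (3*c+3) → DistLE A (t (3*c+3)) y 2 →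
      ∀ b, b ≤ c → y ∉ S.N (3*b) := by
    intro c hcs y hne hle b hb hyN
    have hmem : t (3*c+3) ∈ S.M (3*c+3) := (S.hN3 c).1 (by
      have h := hN0mem (c+1) (by omega)
      rw [show 3*(c+1) = 3*c+3 from by omega] at h
      exact h)
    rw [S.hM3 c] at hmem
    have h4 : y ∈ Cone2 A (t (3*c+3)) ∩ ⋃ k' ≤ c, S.N (3*k') :=
      ⟨⟨hne, hle⟩, Set.mem_iUnion₂.mpr ⟨b, hb, hyN⟩⟩
    rw [hmem.2.2] at h4
    exact h4
  have A2lem : ∀ a, 3*a+3 ≤ s → ¬ A (t (3*a+2)) (t (3*a)) := by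
    intro a ha hA
    exact mcone a ha (t (3*a)) (tne (3*a) (3*a+3) (by omega) (by omega) (by omega))
      ⟨2, by omega, t (3*a+2), harc' (3*a+3) (3*a+2) (by omega) (by omega), t (3*a), hA, rfl⟩
      a le_rfl (hN0mem a (by omega))
  have A0lem : ∀ a, 3*a+3 ≤ s → ¬ A (t (3*a+3)) (t (3*a+1)) := by
    intro a ha hA
    exact mcone a ha (t (3*a)) (tne (3*a) (3*a+3) (by omega) (by omega) (by omega))
      ⟨2, by omega, t (3*a+1), hA, t (3*a), harc' (3*a+1) (3*a) (by omega) (by omega), rfl⟩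
      a le_rfl (hN0mem a (by omega))
  have mkDist2 : ∀ u v w : V, A u w → A w v → ¬ A u v → u ≠ v → DistEq A u v 2 := by
    intro u v w h1 h2 h3 h4
    refine ⟨⟨w, h1, v, h2, rfl⟩, ?_⟩
    intro m hm
    rcases (by omega : m = 0 ∨ m = 1) with rfl | rfl
    · exact fun h => h4 h
    · intro hw
      obtain ⟨x, hx, hxv⟩ := hw
      have hxe : x = v := hxv
      exact h3 (hxe ▸ hx)
  have inN2' : ∀ m, 3*m+3 ≤ s → t (3*m+2) ∈ S.N (3*m+2) ∨ t (3*m+2) ∈ interN2 S m := by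
    intro m hm
    by_cases h : t (3*m+2) ∈ S.N (3*m+2)
    · exact Or.inl h
    · refine Or.inr ⟨⟨?_, t (3*m), hN0mem m (by omega),
        mkDist2 _ _ _ (harc' (3*m+2) (3*m+1) (by omega) (by omega))
          (harc' (3*m+1) (3*m) (by omega) (by omega)) (A2lem m hm)
          (tne (3*m+2) (3*m) (by omega) (by omega) (by omega))⟩, h⟩
      exact mcone m hm (t (3*m+2)) (tne (3*m+2) (3*m+3) (by omega) (by omega) (by omega))
        ⟨1, by omega, t (3*m+2), harc' (3*m+3) (3*m+2) (by omega) (by omega), rfl⟩ m le_rfl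
  have Qdown : ∀ m, 3*m+5 ≤ s → t (3*m+4) ∈ S.N (3*m+4) → t (3*m+1) ∈ S.N (3*m+1) := by
    intro m hm hQ
    have huK : t (3*m+4) ∈ K := subK1 (m+1) _ (by
      rw [show 3*(m+1)+1 = 3*m+4 from by omega]; exact hQ)
    rcases inN2' m (by omega) with hN | hI
    · exact (karc2 _ _ _ huK (subK2 m _ hN) (tnx (3*m+3) (by omega) (by omega))
        (tne (3*m+4) (3*m+2) (by omega) (by omega) (by omega))
        (harc' (3*m+4) (3*m+3) (by omega) (by omega))
        (harc' (3*m+3) (3*m+2) (by omega) (by omega))).elim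
    · exact (hequiv m (by omega)).2 hI
  have chordBlock : ∀ b, 3*b+5 ≤ s → A (t (3*b+4)) (t (3*b+2)) →
      t (3*b+4) ∈ S.N (3*b+4) → False := by
    intro b hb hc hQ
    have h1 : t (3*b+1) ∈ S.N (3*b+1) := Qdown b hb hQ
    have huK : t (3*b+4) ∈ K := subK1 (b+1) _ (by
      rw [show 3*(b+1)+1 = 3*b+4 from by omega]; exact hQ)
    exact karc2 _ _ _ huK (subK1 b _ h1) (tnx (3*b+2) (by omega) (by omega))
      (tne (3*b+4) (3*b+1) (by omega) (by omega) (by omega)) hc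
      (harc' (3*b+2) (3*b+1) (by omega) (by omega))
  have NoQ : ∀ b, 3*b+5 ≤ s → A (t (3*b+4)) (t (3*b+2)) →
      ∀ d m, m = b+1+d → 3*m+2 ≤ s → t (3*m+1) ∈ S.N (3*m+1) → False := by
    intro b hb hc d
    induction d with
    | zero =>
      intro m hm h1 h2
      subst hm
      rw [show 3*(b+1+0)+1 = 3*b+4 from by omega] at h2
      exact chordBlock b hb hc h2
    | succ d ih =>
      intro m hm h1 h2
      have h3 : t (3*(b+1+d)+1) ∈ S.N (3*(b+1+d)+1) := Qdown (b+1+d) (by omega) (by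
        rw [show 3*(b+1+d)+4 = 3*m+1 from by omega]; exact h2)
      exact ih (b+1+d) rfl (by omega) h3
  have Pall : ∀ b, 3*b+5 ≤ s → A (t (3*b+4)) (t (3*b+2)) →
      ∀ k', b+1 ≤ k' → 3*k'+2 ≤ s → t (3*k'+2) ∈ S.N (3*k'+2) := by
    intro b hb hc k' hk h2
    rcases lt_or_eq_of_le h2 with hlt | heq
    · rcases inN2' k' (by omega) with hN | hI
      · exact hN
      · exact (NoQ b hb hc (k'-(b+1)) k' (by omega) h2 ((hequiv k' (by omega)).2 hI)).elim
    · have h := hts; rw [← heq] at h; exact h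
  have TwoChords : ∀ b c, b < c → 3*b+5 ≤ s → A (t (3*b+4)) (t (3*b+2)) →
      3*c+4 ≤ s → A (t (3*c+4)) (t (3*c+2)) → False := by
    intro b c hbc hb hcb hcs hcc
    have hv : t (3*c+2) ∈ K := subK2 c _ (Pall b hb hcb c (by omega) (by omega))
    rcases lt_or_eq_of_le hcs with hlt | heq
    · have hu : t (3*c+5) ∈ K := subK2 (c+1) _ (by
        rw [show 3*(c+1)+2 = 3*c+5 from by omega]
        exact Pall b hb hcb (c+1) (by omega) (by omega))
      exact karc2 _ _ _ hu hv (tnx (3*c+4) (by omega) (by omega))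
        (tne (3*c+5) (3*c+2) (by omega) (by omega) (by omega))
        (harc' (3*c+5) (3*c+4) (by omega) (by omega)) hcc
    · have hu : t (3*c+4) ∈ K := subK1 (c+1) _ (by
        rw [show 3*(c+1)+1 = 3*c+4 from by omega]
        have h := hts; rw [← heq] at h; exact h)
      exact karc1 _ _ hu hv (tne (3*c+4) (3*c+2) (by omega) (by omega) (by omega)) hcc
  rcases (by omega : i % 3 = 2 ∨ i % 3 = 0 ∨ i % 3 = 1) with h | h | h
  · obtain ⟨a, rfl⟩ : ∃ a, i = 3*a+2 := ⟨(i-2)/3, by omega⟩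
    rw [show 3*a+2-2 = 3*a from by omega] at hchord
    exact absurd hchord (A2lem a (by omega))
  · obtain ⟨a, rfl⟩ : ∃ a, i = 3*a+3 := ⟨(i-3)/3, by omega⟩
    rw [show 3*a+3-2 = 3*a+1 from by omega] at hchord
    exact absurd hchord (A0lem a (by omega))
  · obtain ⟨b, rfl⟩ : ∃ b, i = 3*b+4 := ⟨(i-4)/3, by omega⟩
    rw [show 3*b+4-2 = 3*b+2 from by omega] at hchord
    have hbs : 3*b+5 ≤ s := by omega
    refine ⟨?_, ?_⟩
    · intro i' h2' hs' hne' hA'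
      rcases (by omega : i' % 3 = 2 ∨ i' % 3 = 0 ∨ i' % 3 = 1) with h' | h' | h'
      · obtain ⟨a, rfl⟩ : ∃ a, i' = 3*a+2 := ⟨(i'-2)/3, by omega⟩
        rw [show 3*a+2-2 = 3*a from by omega] at hA'
        rcases lt_or_eq_of_le hs' with hlt | heq
        · exact A2lem a (by omega) hA'
        · obtain ⟨j, hj1, hjs, -, hin2⟩ := hchordcl (3*a+2) (by omega) hs' (by
            rw [show 3*a+2-2 = 3*a from by omega]; exact hA')
          rw [show 3*a+2-2 = 3*a from by omega] at hin2
          obtain ⟨c, rfl⟩ : ∃ c, a = c+1 := ⟨a-1, by omega⟩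
          rw [show 3*(c+1) = 3*c+3 from by omega] at hin2
          obtain ⟨w, hw, hd⟩ := hin2.1.2
          have hwne : w ≠ t (3*c+3) := fun hh => hd.2 0 (by omega) hh.symm
          have hKc : ¬ (j - 1 ≤ c) := fun hle =>
            mcone c (by omega) w hwne ⟨2, le_rfl, hd.1⟩ (j-1) hle hw
          omega
      · obtain ⟨a, rfl⟩ : ∃ a, i' = 3*a+3 := ⟨(i'-3)/3, by omega⟩
        rw [show 3*a+3-2 = 3*a+1 from by omega] at hA'
        exact A0lem a (by omega) hA'
      · obtain ⟨e, rfl⟩ : ∃ e, i' = 3*e+4 := ⟨(i'-4)/3, by omega⟩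
        rw [show 3*e+4-2 = 3*e+2 from by omega] at hA'
        rcases (by omega : e < b ∨ b < e) with he | he
        · exact TwoChords e b he (by omega) hA' (by omega) hchord
        · exact TwoChords b e he hbs hchord (by omega) hA'
    · intro k' h1 h2
      exact Pall b hbs hchord k' (by omega) h2

end DigraphKernel
end

section
/- Let D be a strongly connected, quasi-3-kernel-perfect digraph in which every circuit of length not divisible by three has four short chords. Then D is 3-kernel-perfect, i.e., every induced subdigraph of D has a 3-kernel. -/
namespace DigraphKernel

variable {V : Type*}

variable {A : V → V → Prop} {x₀ : V} {K : Set V}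

section Aux

variable {W : Type*} {B : W → W → Prop}

lemma walk_append {n m : ℕ} {u v w : W} (h1 : Walk B n u v) (h2 : Walk B m v w) :
    Walk B (n + m) u w := by
  induction n generalizing u with
  | zero => cases h1; simpa using h2
  | succ k ih =>
    obtain ⟨x, hx, hw⟩ := h1
    rw [Nat.succ_add]
    exact ⟨x, hx, ih hw⟩

lemma walk_of_fun : ∀ (n : ℕ) (t : ℕ → W), (∀ i < n, B (t i) (t (i+1))) →
    Walk B n (t 0) (t n) := by
  intro n
  induction n with
  | zero => intro t _; rfl
  | succ k ih =>
    intro t h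
    exact ⟨t 1, h 0 (Nat.succ_pos k), ih (fun i => t (i+1)) (fun i hi => h (i+1) (by omega))⟩

lemma fun_of_walk {n : ℕ} {u v : W} (h : Walk B n u v) :
    ∃ t : ℕ → W, t 0 = u ∧ t n = v ∧ ∀ i < n, B (t i) (t (i+1)) := by
  induction n generalizing u with
  | zero => cases h; exact ⟨fun _ => v, rfl, rfl, fun i hi => absurd hi (by omega)⟩
  | succ k ih =>
    obtain ⟨w, haw, hw⟩ := h
    obtain ⟨t, ht0, htn, harc⟩ := ih hw
    refine ⟨fun i => if i = 0 then u else t (i-1), by simp, by simp [htn], ?_⟩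
    intro i hi
    rcases Nat.eq_zero_or_pos i with rfl | hpos
    · simpa [ht0] using haw
    · have h1 : ¬ (i = 0) := by omega
      have h2 : ¬ (i + 1 = 0) := by omega
      simp only [h1, h2, if_false]
      have := harc (i-1) (by omega)
      have heq : i - 1 + 1 = i := by omega
      rwa [heq] at this

lemma walk_split {n : ℕ} {u v : W} (h : Walk B n u v) :
    ∀ k ≤ n, ∃ w, Walk B k u w ∧ Walk B (n - k) w v := by
  intro k
  induction k generalizing u n with
  | zero => intro _; exact ⟨u, rfl, by simpa using h⟩
  | succ j ih =>
    intro hk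
    match n, h with
    | m + 1, ⟨x, hux, hxv⟩ =>
      obtain ⟨w, w1, w2⟩ := ih hxv (by omega)
      exact ⟨w, ⟨x, hux, w1⟩, by simpa using w2⟩

lemma pair_lemma {n : ℕ} (hn : 4 ≤ n) (x y z : ZMod n) (hxy : x ≠ y) (hxz : x ≠ z)
    (hyz : y ≠ z) :
    ∃ a b : ZMod n,
      ((a = x ∧ b = y) ∨ (a = y ∧ b = x) ∨ (a = x ∧ b = z) ∨ (a = z ∧ b = x) ∨
        (a = y ∧ b = z) ∨ (a = z ∧ b = y)) ∧ b - a ≠ 0 ∧ b - a ≠ 1 ∧ b - a ≠ -1 := by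
  haveI : NeZero n := ⟨by omega⟩
  haveI : Fact (1 < n) := ⟨by omega⟩
  by_contra hcon
  push_neg at hcon
  have h3 : (3 : ZMod n) ≠ 0 := by
    intro h
    have h' : ((3 : ℕ) : ZMod n) = 0 := by exact_mod_cast h
    rw [ZMod.natCast_eq_zero_iff] at h'
    exact absurd (Nat.le_of_dvd (by omega) h') (by omega)
  have h1 : (1 : ZMod n) ≠ 0 := one_ne_zero
  have key : ∀ a b : ZMod n, a ≠ b →
      ((a = x ∧ b = y) ∨ (a = y ∧ b = x) ∨ (a = x ∧ b = z) ∨ (a = z ∧ b = x) ∨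
        (a = y ∧ b = z) ∨ (a = z ∧ b = y)) → b - a = 1 ∨ b - a = -1 := by
    intro a b hab hmem
    by_cases h : b - a = 1
    · exact Or.inl h
    · exact Or.inr (hcon a b hmem (sub_ne_zero.mpr (Ne.symm hab)) h)
  have e1 := key x y hxy (by tauto)
  have e2 := key y z hyz (by tauto)
  have e3 := key z x (Ne.symm hxz) (by tauto)
  have hsum : (y - x) + (z - y) + (x - z) = 0 := by ring
  rcases e1 with e1 | e1 <;> rcases e2 with e2 | e2 <;> rcases e3 with e3 | e3 <;>
    rw [e1, e2, e3] at hsum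
  · exact h3 (by linear_combination hsum)
  · exact h1 (by linear_combination hsum)
  · exact h1 (by linear_combination hsum)
  · exact h1 (by linear_combination -hsum)
  · exact h1 (by linear_combination hsum)
  · exact h1 (by linear_combination -hsum)
  · exact h1 (by linear_combination -hsum)
  · exact h3 (by linear_combination -hsum)

lemma shortcut1 {n : ℕ} [NeZero n] (hn : 2 ≤ n) (c : ZMod n → W)
    (hcyc : ∀ i : ZMod n, B (c i) (c (i+1))) {a : ZMod n} (hch : B (c a) (c (a+2))) :
    Walk B (n - 1) (c a) (c a) := by
  set t : ℕ → W := fun k => if k = 0 then c a else c (a + (k : ZMod n) + 1) with ht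
  have h0 : t 0 = c a := by simp [ht]
  have hend : t (n - 1) = c a := by
    have hne : n - 1 ≠ 0 := by omega
    simp only [ht, hne, if_false]
    congr 1
    have : ((n - 1 : ℕ) : ZMod n) + 1 = 0 := by
      have : ((n - 1 : ℕ) : ZMod n) + 1 = ((n - 1 + 1 : ℕ) : ZMod n) := by push_cast; ring
      rw [this, show n - 1 + 1 = n by omega, ZMod.natCast_self]
    rw [add_assoc, this, add_zero]
  have harcs : ∀ i < n - 1, B (t i) (t (i+1)) := by
    intro i hi
    rcases Nat.eq_zero_or_pos i with rfl | hpos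
    · have : t 1 = c (a + 2) := by
        simp only [ht, if_neg (by omega : (1:ℕ) ≠ 0)]
        congr 1
        push_cast
        ring
      rw [h0, this]; exact hch
    · have h1 : t i = c (a + (i : ZMod n) + 1) := by simp [ht, Nat.pos_iff_ne_zero.mp hpos]
      have h2 : t (i+1) = c (a + (i : ZMod n) + 1 + 1) := by
        simp only [ht, if_neg (by omega : i + 1 ≠ 0)]
        congr 1
        push_cast
        ring
      rw [h1, h2]; exact hcyc _
  have := walk_of_fun (n-1) t harcs
  rwa [h0, hend] at this

lemma shortcut2 {n : ℕ} [NeZero n] (c : ZMod n → W)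
    (hcyc : ∀ i : ZMod n, B (c i) (c (i+1))) {a b : ZMod n}
    (hca : B (c a) (c (a+2))) (hcb : B (c b) (c (b+2)))
    {d : ℕ} (hd2 : 2 ≤ d) (hdn : d ≤ n - 2) (hn : 4 ≤ n) (hb : b = a + (d : ZMod n)) :
    Walk B (n - 2) (c a) (c a) := by
  set t : ℕ → W := fun k => if k = 0 then c a else
    if k < d then c (a + (k : ZMod n) + 1) else c (a + (k : ZMod n) + 2) with ht
  have h0 : t 0 = c a := by simp [ht]
  have hend : t (n - 2) = c a := by
    have hne : n - 2 ≠ 0 := by omega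
    have hge : ¬ (n - 2 < d) := by omega
    simp only [ht, hne, if_false, hge]
    congr 1
    have : ((n - 2 : ℕ) : ZMod n) + 2 = 0 := by
      have : ((n - 2 : ℕ) : ZMod n) + 2 = ((n - 2 + 2 : ℕ) : ZMod n) := by push_cast; ring
      rw [this, show n - 2 + 2 = n by omega, ZMod.natCast_self]
    rw [add_assoc, this, add_zero]
  have harcs : ∀ i < n - 2, B (t i) (t (i+1)) := by
    intro i hi
    rcases Nat.eq_zero_or_pos i with rfl | hpos
    · have : t 1 = c (a + 2) := by
        simp only [ht, if_neg (by omega : (1:ℕ) ≠ 0), if_pos (by omega : 1 < d)]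
        congr 1
        push_cast
        ring
      rw [h0, this]; exact hca
    · by_cases hlt : i + 1 < d
      · have h1 : t i = c (a + (i : ZMod n) + 1) := by
          simp only [ht, if_neg (Nat.pos_iff_ne_zero.mp hpos), if_pos (show i < d by omega)]
        have h2 : t (i+1) = c (a + (i : ZMod n) + 1 + 1) := by
          simp only [ht, if_neg (by omega : i + 1 ≠ 0), if_pos hlt]
          congr 1
          push_cast
          ring
        rw [h1, h2]; exact hcyc _
      · by_cases heq : i + 1 = d
        · have hcast : ((d : ℕ) : ZMod n) = (i : ZMod n) + 1 := by
            rw [← heq]; push_cast; ring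
          have h1 : t i = c b := by
            simp only [ht, if_neg (Nat.pos_iff_ne_zero.mp hpos), if_pos (show i < d by omega)]
            rw [hb, hcast]
            congr 1
            ring
          have h2 : t (i+1) = c (b + 2) := by
            simp only [ht, if_neg (show i + 1 ≠ 0 by omega),
              if_neg (show ¬ (i + 1 < d) by omega)]
            rw [hb, hcast]
            congr 1
            push_cast
            ring
          rw [h1, h2]; exact hcb
        · have hge : d ≤ i := by omega
          have h1 : t i = c (a + (i : ZMod n) + 2) := by
            simp only [ht, if_neg (Nat.pos_iff_ne_zero.mp hpos),
              if_neg (show ¬ (i < d) by omega)]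
          have h2 : t (i+1) = c (a + (i : ZMod n) + 2 + 1) := by
            simp only [ht, if_neg (by omega : i + 1 ≠ 0), if_neg (by omega : ¬ (i + 1 < d))]
            congr 1
            push_cast
            ring
          rw [h1, h2]; exact hcyc _
  have := walk_of_fun (n-2) t harcs
  rwa [h0, hend] at this

lemma closed_mod3 (hloop : Irreflexive B)
    (hch : ∀ (n : ℕ), 2 ≤ n → ∀ c : ZMod n → W, IsCycle B c → n % 3 ≠ 0 →
      FourShortChords B c) :
    ∀ n : ℕ, ∀ u : W, 1 ≤ n → Walk B n u u → n % 3 = 0 := by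
  intro n
  induction n using Nat.strong_induction_on with
  | _ n ih =>
  intro u h1 hw
  by_contra hmod
  obtain ⟨t, ht0, htn, harc⟩ := fun_of_walk hw
  by_cases hrep : ∃ i j, i < j ∧ j ≤ n ∧ (i ≠ 0 ∨ j ≠ n) ∧ t i = t j
  · obtain ⟨i, j, hij, hjn, hne, heq⟩ := hrep
    have w1 : Walk B (j - i) (t i) (t i) := by
      have h := walk_of_fun (j - i) (fun k => t (i + k)) (fun k hk => by
        have := harc (i + k) (by omega)
        simpa [Nat.add_assoc] using this)
      simp only [Nat.add_zero] at h
      rw [show i + (j - i) = j by omega] at h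
      rwa [← heq] at h
    have w2 : Walk B (n - (j - i)) (t i) (t i) := by
      have ha : Walk B (n - j) (t j) (t n) := by
        have h := walk_of_fun (n - j) (fun k => t (j + k)) (fun k hk => by
          have := harc (j + k) (by omega)
          simpa [Nat.add_assoc] using this)
        simp only [Nat.add_zero] at h
        rwa [show j + (n - j) = n by omega] at h
      have hb : Walk B i (t 0) (t i) := walk_of_fun i t (fun k hk => harc k (by omega))
      rw [htn, ← ht0] at ha
      have := walk_append ha hb
      rw [show n - j + i = n - (j - i) by omega] at this
      rwa [← heq] at this
    have m1 := ih (j - i) (by omega) (t i) (by omega) w1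
    have m2 := ih (n - (j - i)) (by omega) (t i) (by omega) w2
    omega
  · push_neg at hrep
    rcases Nat.lt_or_ge n 2 with hn2 | hn2
    · have hn1 : n = 1 := by omega
      subst hn1
      have := harc 0 (by omega)
      rw [htn, ht0] at this
      exact hloop u this
    haveI : NeZero n := ⟨by omega⟩
    set c : ZMod n → W := fun i => t i.val with hc
    have hinj : Function.Injective c := by
      intro i j hij
      by_contra hne
      have hvne : i.val ≠ j.val := fun h => hne (ZMod.val_injective n h)
      rcases Nat.lt_or_ge i.val j.val with h | h
      · exact hrep i.val j.val h (by have := ZMod.val_lt j; omega)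
          (Or.inr (by have := ZMod.val_lt j; omega)) hij
      · exact hrep j.val i.val (by omega) (by have := ZMod.val_lt i; omega)
          (Or.inr (by have := ZMod.val_lt i; omega)) hij.symm
    haveI : Fact (1 < n) := ⟨by omega⟩
    have harc' : ∀ i : ZMod n, B (c i) (c (i+1)) := by
      intro i
      have hval : (i + 1).val = (i.val + 1) % n := by
        rw [ZMod.val_add, ZMod.val_one]
      rcases Nat.lt_or_ge (i.val + 1) n with h | h
      · have : (i + 1).val = i.val + 1 := by rw [hval, Nat.mod_eq_of_lt h]
        show B (t i.val) (t (i+1).val)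
        rw [this]
        exact harc i.val (by omega)
      · have hvn : i.val = n - 1 := by have := ZMod.val_lt i; omega
        have : (i + 1).val = 0 := by rw [hval, hvn, show n - 1 + 1 = n by omega, Nat.mod_self]
        show B (t i.val) (t (i+1).val)
        rw [this, ht0, ← htn, hvn]
        have := harc (n-1) (by omega)
        rwa [show n - 1 + 1 = n by omega] at this
    obtain ⟨i₁, i₂, i₃, i₄, h12, h13, h14, h23, h24, h34, s1, s2, s3, s4⟩ :=
      hch n hn2 c ⟨hinj, harc'⟩ hmod
    rcases Nat.lt_or_ge (n % 3) 2 with h31 | h32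
    · -- n % 3 = 1, n ≥ 4
      have hn4 : 4 ≤ n := by omega
      obtain ⟨a, b, hmem, hd0, hd1, hdm1⟩ := pair_lemma hn4 i₁ i₂ i₃ h12 h13 h23
      have hca : B (c a) (c (a + 2)) := by
        rcases hmem with ⟨rfl, _⟩ | ⟨rfl, _⟩ | ⟨rfl, _⟩ | ⟨rfl, _⟩ | ⟨rfl, _⟩ | ⟨rfl, _⟩
        exacts [s1.1, s2.1, s1.1, s3.1, s2.1, s3.1]
      have hcb : B (c b) (c (b + 2)) := by
        rcases hmem with ⟨_, rfl⟩ | ⟨_, rfl⟩ | ⟨_, rfl⟩ | ⟨_, rfl⟩ | ⟨_, rfl⟩ | ⟨_, rfl⟩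
        exacts [s2.1, s1.1, s3.1, s1.1, s3.1, s2.1]
      set d : ℕ := (b - a).val with hd
      have hbd : b = a + (d : ZMod n) := by
        rw [hd, ZMod.natCast_zmod_val]
        ring
      have hdlt : d < n := ZMod.val_lt _
      have hdne0 : d ≠ 0 := by
        intro h
        apply hd0
        rw [← ZMod.natCast_zmod_val (b - a), ← hd, h, Nat.cast_zero]
      have hdne1 : d ≠ 1 := by
        intro h
        apply hd1
        rw [← ZMod.natCast_zmod_val (b - a), ← hd, h, Nat.cast_one]
      have hdnem1 : d ≠ n - 1 := by
        intro h
        apply hdm1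
        rw [← ZMod.natCast_zmod_val (b - a), ← hd, h]
        have : ((n - 1 : ℕ) : ZMod n) = (n : ZMod n) - 1 := by
          push_cast [Nat.cast_sub (by omega : 1 ≤ n)]
          ring
        rw [this, ZMod.natCast_self]
        ring
      have hwalk := shortcut2 c harc' hca hcb (by omega : 2 ≤ d) (by omega : d ≤ n - 2)
        hn4 hbd
      have := ih (n - 2) (by omega) (c a) (by omega) hwalk
      omega
    · -- n % 3 = 2
      have hwalk := shortcut1 hn2 c harc' s1.1
      have := ih (n - 1) (by omega) (c i₁) (by omega) hwalk
      omega

lemma walk_restrict_univ {n : ℕ} {u v : W} (h : Walk B n u v) :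
    Walk (Restrict B Set.univ) n u v := by
  induction n generalizing u with
  | zero => exact h
  | succ k ih =>
    obtain ⟨w, hw, hwalk⟩ := h
    exact ⟨w, ⟨trivial, trivial, hw⟩, ih hwalk⟩

lemma walk_unrestrict {S : Set W} {n : ℕ} {u v : W} (h : Walk (Restrict B S) n u v) :
    Walk B n u v := by
  induction n generalizing u with
  | zero => exact h
  | succ k ih =>
    obtain ⟨w, hw, hwalk⟩ := h
    exact ⟨w, hw.2.2, ih hwalk⟩

end Aux

/-- a strongly connected, quasi-`3`-kernel-perfect digraph in which every
circuit of length not divisible by three has four short chords is `3`-kernel-perfect. -/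
theorem threeKernelPerfect_of_quasi {V : Type*} [Fintype V] (A : V → V → Prop)
    (hloopless : Irreflexive A) (hSC : StrongConnected A)
    (hch : ∀ (n : ℕ), 2 ≤ n → ∀ c : ZMod n → V, IsCycle A c → n % 3 ≠ 0 →
      FourShortChords A c)
    (hquasi : ∀ S : Set V, S ≠ Set.univ → ∃ K : Set V, Kernel3On A S K) :
    ∀ S : Set V, ∃ K : Set V, Kernel3On A S K := by
  intro S
  by_cases hS : S = Set.univ
  · subst hS
    by_cases hV : Nonempty V
    · obtain ⟨r⟩ := hV
      have hmod := closed_mod3 hloopless hch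
      set f : V → ℕ := fun v => Classical.choose (hSC r v) with hf
      have hfw : ∀ v, Walk A (f v) r v := fun v => Classical.choose_spec (hSC r v)
      have huniq : ∀ (v : V) (a b : ℕ), Walk A a r v → Walk A b r v → a % 3 = b % 3 := by
        intro v a b ha hb
        obtain ⟨cl, hc⟩ := hSC v r
        have h1 : Walk A (a + cl) r r := walk_append ha hc
        have h2 : Walk A (b + cl) r r := walk_append hb hc
        have k1 : (a + cl) % 3 = 0 := by
          by_cases h : a + cl = 0
          · omega
          · exact hmod (a + cl) r (by omega) h1
        have k2 : (b + cl) % 3 = 0 := by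
          by_cases h : b + cl = 0
          · omega
          · exact hmod (b + cl) r (by omega) h2
        omega
      refine ⟨{v | f v % 3 = 0}, Set.subset_univ _, ?_, ?_⟩
      · intro u hu v hv huv m hm hwalk
        have hw : Walk A m u v := walk_unrestrict hwalk
        have hcomp : Walk A (f u + m) r v := walk_append (hfw u) hw
        have := huniq v (f u + m) (f v) hcomp (hfw v)
        have hm0 : m = 0 := by
          simp only [Set.mem_setOf_eq] at hu hv
          omega
        subst hm0
        exact huv hw
      · intro u _ hK
        simp only [Set.mem_setOf_eq] at hK
        obtain ⟨cl, hcw⟩ := hSC u r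
        have h0 : (f u + cl) % 3 = 0 := by
          have hw : Walk A (f u + cl) r r := walk_append (hfw u) hcw
          by_cases h : f u + cl = 0
          · exfalso; apply hK; omega
          · exact hmod (f u + cl) r (by omega) hw
        have hfu3 : f u % 3 = 1 ∨ f u % 3 = 2 := by omega
        set k : ℕ := if cl % 3 = 1 then 1 else 2 with hk
        have hkcl : k ≤ cl := by
          rcases hfu3 with h | h <;> simp only [hk] <;> split <;> omega
        obtain ⟨w, hw1, hw2⟩ := walk_split hcw k hkcl
        have hclk : (cl - k) % 3 = 0 := by
          simp only [hk] at hkcl ⊢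
          by_cases h : cl % 3 = 1 <;> simp [h] at hkcl ⊢ <;> omega
        have hwmem : f w % 3 = 0 := by
          have hcomp : Walk A (f w + (cl - k)) r r := walk_append (hfw w) hw2
          have : (f w + (cl - k)) % 3 = 0 := by
            by_cases h : f w + (cl - k) = 0
            · omega
            · exact hmod _ r (by omega) hcomp
          omega
        refine ⟨w, hwmem, k, ?_, walk_restrict_univ hw1⟩
        simp only [hk]; split <;> omega
    · refine ⟨∅, Set.empty_subset _, ?_, ?_⟩
      · intro u hu
        exact absurd hu (Set.notMem_empty u)
      · intro u _ _
        exact absurd (Nonempty.intro u) hV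
  · exact hquasi S hS

end DigraphKernel
end
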